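/- arXiv:1810.12275 — 3 statements merged into one kernel-verified Lean document; each statement's English description precedes it below -/
import Mathlib

section
/- Every paperfolding word has unbounded abelian complexity: for every instruction sequence b with values in {−1,1}, the abelian complexity function a(n) of the paperfolding word f associated with b is unbounded, i.e., for every N there exists n with a(n) > N. -/
/-- The paperfolding word over `{0,1}` (here `Bool`, with `true` playing the
role of `1`) associated with the instruction sequence `b` (values in `{-1,1}`):
`f_i = 1` iff `i ≡ 2^k(2 + b_k) (mod 2^{k+2})`, where `k = ν₂(i)` is the
2-adic valuation of `i`. (The value at `i = 0` is irrelevant: factors only use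
positions `i ≥ 1`.) -/
def pfold (b : ℕ → ℤ) (i : ℕ) : Bool :=
  decide ((i : ℤ) ≡ 2 ^ (padicValNat 2 i) * (2 + b (padicValNat 2 i))
    [ZMOD (2 ^ (padicValNat 2 i + 2))])

/-- The Parikh vector of a finite word: the number of occurrences of each letter. -/
def parikh {A : Type*} [DecidableEq A] (u : List A) : A → ℕ := fun a => u.count a

/-- The abelian complexity of the infinite word `w = w₁w₂⋯` (indexed from 1):
the number of distinct Parikh vectors of factors `w_{ℓ+1} ⋯ w_{ℓ+n}` of length `n`. -/
noncomputable def abelianComplexity1 {A : Type*} [DecidableEq A] (w : ℕ → A) (n : ℕ) : ℕ :=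
  Set.ncard
    {p : A → ℕ | ∃ ℓ : ℕ, p = parikh ((List.range n).map (fun j => w (ℓ + j + 1)))}

/-! ### Auxiliary definitions -/

/-- Shift of the instruction sequence. -/
def sft (b : ℕ → ℤ) : ℕ → ℤ := fun k => b (k + 1)

/-- The parity class of odd positions carrying a `1`. -/
def eb (b : ℕ → ℤ) : ℕ := if b 0 = 1 then 1 else 0

/-- Count of `1`s in the window `(l, l+n]`. -/
def cnt (b : ℕ → ℤ) (l n : ℕ) : ℕ :=
  ∑ j ∈ Finset.range n, (pfold b (l + j + 1)).toNat

/-- Count of integers in `[a, a+m)` congruent to `e` mod 2. -/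
def oc (e a m : ℕ) : ℕ :=
  ∑ j ∈ Finset.range m, (if (a + j) % 2 = e then 1 else 0)

lemma toNat_decide (P : Prop) [Decidable P] : (decide P).toNat = if P then 1 else 0 := by
  by_cases h : P <;> simp [h]

lemma eb_lt (b : ℕ → ℤ) : eb b < 2 := by
  unfold eb; split <;> omega

/-! ### Basic recursion for `pfold` -/

lemma pfold_odd (b : ℕ → ℤ) (hb : b 0 = 1 ∨ b 0 = -1) (j : ℕ) :
    pfold b (2 * j + 1) = decide (j % 2 = eb b) := by
  have hval : padicValNat 2 (2 * j + 1) = 0 :=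
    padicValNat.eq_zero_of_not_dvd (by omega)
  simp only [pfold, hval]
  rw [decide_eq_decide]
  rcases hb with h | h <;>
    simp only [eb, h, Int.ModEq] <;> norm_num <;> push_cast <;> omega

lemma pfold_even (b : ℕ → ℤ) (j : ℕ) (hj : j ≠ 0) :
    pfold b (2 * j) = pfold (sft b) j := by
  have hval : padicValNat 2 (2 * j) = padicValNat 2 j + 1 := by
    have h := padicValNat.mul (p := 2) (a := 2) (b := j) (by norm_num) hj
    rw [h, padicValNat.self (by norm_num)]; omega
  simp only [pfold, hval]
  rw [decide_eq_decide]; simp only [sft]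
  set k := padicValNat 2 j with hk
  have e1 : ((2 * j : ℕ) : ℤ) = 2 * (j : ℤ) := by push_cast; ring
  have e2 : (2 : ℤ) ^ (k + 1) * (2 + b (k + 1)) = 2 * (2 ^ k * (2 + b (k + 1))) := by ring
  have e3 : (2 : ℤ) ^ (k + 1 + 2) = 2 * 2 ^ (k + 2) := by ring
  simp only [Int.ModEq, e1, e2, e3, Int.mul_emod_mul_of_pos _ _ (by norm_num : (0:ℤ) < 2)]
  constructor
  · intro H; exact mul_left_cancel₀ (by norm_num) H
  · intro H; rw [H]

/-! ### Sum-splitting identities -/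

lemma cnt_succ (b : ℕ → ℤ) (l n : ℕ) :
    cnt b l (n + 1) = cnt b l n + (pfold b (l + n + 1)).toNat :=
  Finset.sum_range_succ _ _

lemma oc_succ (e a m : ℕ) :
    oc e a (m + 1) = oc e a m + (if (a + m) % 2 = e then 1 else 0) :=
  Finset.sum_range_succ _ _

lemma cnt_split₀ (b : ℕ → ℤ) (hb : b 0 = 1 ∨ b 0 = -1) (a m : ℕ) :
    cnt b (2 * a) (2 * m) = oc (eb b) a m + cnt (sft b) a m := by
  induction m with
  | zero => simp [cnt, oc]
  | succ m ih =>
    have h1 : 2 * (m + 1) = 2 * m + 1 + 1 := by ring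
    rw [h1, cnt_succ, cnt_succ, oc_succ, cnt_succ, ih]
    have e1 : 2 * a + 2 * m + 1 = 2 * (a + m) + 1 := by ring
    have e2 : 2 * a + (2 * m + 1) + 1 = 2 * (a + m + 1) := by ring
    rw [e1, e2, pfold_odd b hb (a + m), pfold_even b (a + m + 1) (by omega), toNat_decide]
    omega

lemma cnt_split₁ (b : ℕ → ℤ) (hb : b 0 = 1 ∨ b 0 = -1) (a m : ℕ) :
    cnt b (2 * a + 1) (2 * m) = oc (eb b) (a + 1) m + cnt (sft b) a m := by
  induction m with
  | zero => simp [cnt, oc]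
  | succ m ih =>
    have h1 : 2 * (m + 1) = 2 * m + 1 + 1 := by ring
    rw [h1, cnt_succ, cnt_succ, oc_succ, cnt_succ, ih]
    have e1 : 2 * a + 1 + 2 * m + 1 = 2 * (a + m + 1) := by ring
    have e2 : 2 * a + 1 + (2 * m + 1) + 1 = 2 * (a + m + 1) + 1 := by ring
    rw [e1, e2, pfold_odd b hb (a + m + 1), pfold_even b (a + m + 1) (by omega), toNat_decide]
    have e3 : a + 1 + m = a + m + 1 := by ring
    rw [e3]
    omega

lemma cnt_split₀' (b : ℕ → ℤ) (hb : b 0 = 1 ∨ b 0 = -1) (a m : ℕ) :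
    cnt b (2 * a) (2 * m + 1) = oc (eb b) a (m + 1) + cnt (sft b) a m := by
  rw [cnt_succ, cnt_split₀ b hb, oc_succ]
  have e1 : 2 * a + 2 * m + 1 = 2 * (a + m) + 1 := by ring
  rw [e1, pfold_odd b hb (a + m), toNat_decide]
  omega

lemma cnt_split₁' (b : ℕ → ℤ) (hb : b 0 = 1 ∨ b 0 = -1) (a m : ℕ) :
    cnt b (2 * a + 1) (2 * m + 1) = oc (eb b) (a + 1) m + cnt (sft b) a (m + 1) := by
  rw [cnt_succ, cnt_split₁ b hb, cnt_succ]
  have e2 : 2 * a + 1 + 2 * m + 1 = 2 * (a + m + 1) := by ring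
  rw [e2, pfold_even b (a + m + 1) (by omega)]
  have e3 : a + m + 1 = a + (m + 1) := by ring
  rw [e3]
  omega

lemma oc_two (e a m : ℕ) (he : e < 2) : oc e a (m + 2) = oc e a m + 1 := by
  rw [oc_succ, oc_succ]
  split_ifs <;> omega

lemma oc_odd (e a s : ℕ) (he : e < 2) :
    oc e a (2 * s + 1) = s + (if a % 2 = e then 1 else 0) := by
  induction s with
  | zero =>
    simp only [Nat.mul_zero, Nat.zero_add, oc, Finset.sum_range_one, Nat.add_zero]
  | succ s ih =>
    have h1 : 2 * (s + 1) + 1 = 2 * s + 1 + 2 := by ring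
    rw [h1, oc_two e a _ he, ih]
    omega

/-! ### The main inductive construction -/

lemma gain (b' : ℕ → ℤ) (hb' : ∀ k, b' k = 1 ∨ b' k = -1) (t : ℕ)
    (ih : ∀ q : ℕ, q < 2 → ∃ m a₁ a₂ : ℕ, m % 2 = 1 ∧ a₁ % 2 = q ∧ a₂ % 2 = q ∧
      cnt (sft b') a₁ m + t ≤ cnt (sft b') a₂ m)
    (π : ℕ) (hπ : π < 2) :
    ∃ s l₁ l₂ : ℕ, l₁ % 2 = (π + 1) % 2 ∧ l₂ % 2 = π ∧
      cnt b' l₁ (2 * (2 * s + 1)) + (t + 1) ≤ cnt b' l₂ (2 * (2 * s + 1)) := by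
  set e := eb b' with he
  have helt : e < 2 := eb_lt b'
  obtain ⟨m, a₁, a₂, hm, h1, h2, hd⟩ := ih ((e + π) % 2) (by omega)
  obtain ⟨s, rfl⟩ : ∃ s, m = 2 * s + 1 := ⟨m / 2, by omega⟩
  interval_cases π
  · -- hi window starts even (δ = 0), lo window odd (δ = 1)
    refine ⟨s, 2 * a₁ + 1, 2 * a₂, by omega, by omega, ?_⟩
    rw [cnt_split₁ b' (hb' 0) a₁ (2 * s + 1), cnt_split₀ b' (hb' 0) a₂ (2 * s + 1),
      ← he, oc_odd e (a₁ + 1) s helt, oc_odd e a₂ s helt]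
    have i1 : ¬ ((a₁ + 1) % 2 = e) := by omega
    have i2 : a₂ % 2 = e := by omega
    rw [if_neg i1, if_pos i2]
    omega
  · -- hi window starts odd (δ = 1), lo window even (δ = 0)
    refine ⟨s, 2 * a₁, 2 * a₂ + 1, by omega, by omega, ?_⟩
    rw [cnt_split₀ b' (hb' 0) a₁ (2 * s + 1), cnt_split₁ b' (hb' 0) a₂ (2 * s + 1),
      ← he, oc_odd e a₁ s helt, oc_odd e (a₂ + 1) s helt]
    have i1 : ¬ (a₁ % 2 = e) := by omega
    have i2 : (a₂ + 1) % 2 = e := by omega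
    rw [if_neg i1, if_pos i2]
    omega

lemma key : ∀ (t : ℕ) (b : ℕ → ℤ), (∀ k, b k = 1 ∨ b k = -1) → ∀ p : ℕ, p < 2 →
    ∃ m a₁ a₂ : ℕ, m % 2 = 1 ∧ a₁ % 2 = p ∧ a₂ % 2 = p ∧
      cnt b a₁ m + t ≤ cnt b a₂ m := by
  intro t
  induction t with
  | zero =>
    intro b hb p hp
    exact ⟨1, p, p, rfl, Nat.mod_eq_of_lt hp, Nat.mod_eq_of_lt hp, by omega⟩
  | succ t ih =>
    intro b hb p hp
    set e0 := eb b with he0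
    have he0lt : e0 < 2 := eb_lt b
    have hb' : ∀ k, sft b k = 1 ∨ sft b k = -1 := fun k => hb (k + 1)
    have ih' : ∀ q : ℕ, q < 2 → ∃ m a₁ a₂ : ℕ, m % 2 = 1 ∧ a₁ % 2 = q ∧ a₂ % 2 = q ∧
        cnt (sft (sft b)) a₁ m + t ≤ cnt (sft (sft b)) a₂ m :=
      fun q hq => ih (sft (sft b)) (fun k => hb (k + 2)) q hq
    interval_cases p
    · -- final windows start at even positions
      obtain ⟨s, l₁, l₂, hl1, hl2, hd⟩ := gain (sft b) hb' t ih' e0 he0lt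
      refine ⟨2 * (2 * (2 * s + 1)) + 1, 2 * l₁, 2 * l₂, by omega, by omega, by omega, ?_⟩
      rw [cnt_split₀' b (hb 0) l₁ (2 * (2 * s + 1)), cnt_split₀' b (hb 0) l₂ (2 * (2 * s + 1))]
      have h4 : 2 * (2 * s + 1) + 1 = 2 * (2 * s + 1) + 1 := rfl
      have h5 : oc (eb b) l₁ (2 * (2 * s + 1) + 1) = (2 * s + 1) + 0 := by
        rw [oc_odd (eb b) l₁ (2 * s + 1) he0lt, if_neg (by omega)]
      have h6 : oc (eb b) l₂ (2 * (2 * s + 1) + 1) = (2 * s + 1) + 1 := by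
        rw [oc_odd (eb b) l₂ (2 * s + 1) he0lt, if_pos (by omega)]
      rw [h5, h6]
      omega
    · -- final windows start at odd positions
      obtain ⟨s, l₁, l₂, hl1, hl2, hd⟩ := gain (sft b) hb' t ih' ((e0 + 1) % 2) (by omega)
      refine ⟨2 * (2 * (2 * s) + 1) + 1, 2 * l₁ + 1, 2 * l₂ + 1, by omega, by omega, by omega, ?_⟩
      rw [cnt_split₁' b (hb 0) l₁ (2 * (2 * s) + 1), cnt_split₁' b (hb 0) l₂ (2 * (2 * s) + 1)]
      have h7 : 2 * (2 * s) + 1 + 1 = 2 * (2 * s + 1) := by ring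
      rw [h7]
      have h5 : oc (eb b) (l₁ + 1) (2 * (2 * s) + 1) = 2 * s + 0 := by
        rw [oc_odd (eb b) (l₁ + 1) (2 * s) he0lt, if_neg (by omega)]
      have h6 : oc (eb b) (l₂ + 1) (2 * (2 * s) + 1) = 2 * s + 1 := by
        rw [oc_odd (eb b) (l₂ + 1) (2 * s) he0lt, if_pos (by omega)]
      rw [h5, h6]
      omega

/-! ### Sliding windows: discrete intermediate value theorem -/

lemma cnt_shift (b : ℕ → ℤ) (l n : ℕ) :
    cnt b l (n + 1) = (pfold b (l + 1)).toNat + cnt b (l + 1) n := by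
  induction n with
  | zero => simp [cnt]
  | succ n ih =>
    rw [cnt_succ, ih, cnt_succ]
    have e1 : l + 1 + n + 1 = l + (n + 1) + 1 := by ring
    rw [e1]
    omega

lemma cnt_step (b : ℕ → ℤ) (l n : ℕ) :
    cnt b l n ≤ cnt b (l + 1) n + 1 ∧ cnt b (l + 1) n ≤ cnt b l n + 1 := by
  have h1 := cnt_succ b l n
  have h2 := cnt_shift b l n
  have hto : ∀ x : Bool, x.toNat ≤ 1 := by decide
  have t1 := hto (pfold b (l + n + 1))
  have t2 := hto (pfold b (l + 1))
  omega

lemma ivt_up (g : ℕ → ℕ) (hg : ∀ i, g i ≤ g (i + 1) + 1 ∧ g (i + 1) ≤ g i + 1) :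
    ∀ (d x v : ℕ), g x ≤ v → v ≤ g (x + d) → ∃ z, g z = v := by
  intro d
  induction d with
  | zero => intro x v h1 h2; rw [Nat.add_zero] at h2; exact ⟨x, by omega⟩
  | succ d ihd =>
    intro x v h1 h2
    by_cases h : g (x + 1) ≤ v
    · refine ihd (x + 1) v h ?_
      have e : x + 1 + d = x + (d + 1) := by ring
      rwa [e]
    · exact ⟨x, by have := (hg x).2; omega⟩

lemma ivt_down (g : ℕ → ℕ) (hg : ∀ i, g i ≤ g (i + 1) + 1 ∧ g (i + 1) ≤ g i + 1) :
    ∀ (d x v : ℕ), g (x + d) ≤ v → v ≤ g x → ∃ z, g z = v := by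
  intro d
  induction d with
  | zero => intro x v h1 h2; rw [Nat.add_zero] at h1; exact ⟨x, by omega⟩
  | succ d ihd =>
    intro x v h1 h2
    by_cases h : v ≤ g (x + 1)
    · refine ihd (x + 1) v ?_ h
      have e : x + 1 + d = x + (d + 1) := by ring
      rwa [e]
    · exact ⟨x, by have := (hg x).1; omega⟩

/-! ### Counting Parikh vectors -/

lemma count_window (b : ℕ → ℤ) (l n : ℕ) :
    ((List.range n).map (fun j => pfold b (l + j + 1))).count true = cnt b l n := by
  induction n with
  | zero => simp [cnt]
  | succ n ih =>
    rw [List.range_succ, List.map_append, List.count_append, ih, cnt_succ]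
    cases h : pfold b (l + n + 1) <;> simp [h]

lemma count_false_add_true (u : List Bool) : u.count false + u.count true = u.length := by
  induction u with
  | nil => simp
  | cons a u ih => cases a <;> simp [List.count_cons] <;> omega

/-- Every paperfolding word has unbounded abelian complexity. -/
theorem pfold_abelian_complexity_unbounded
    (b : ℕ → ℤ) (hb : ∀ k, b k = 1 ∨ b k = -1) :
    ∀ N : ℕ, ∃ n : ℕ, N < abelianComplexity1 (pfold b) n := by
  intro N
  obtain ⟨m, a₁, a₂, hm, _, _, hd⟩ := key N b hb 0 (by norm_num)
  refine ⟨m, ?_⟩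
  set g : ℕ → ℕ := fun l => cnt b l m with hgdef
  have hd' : g a₁ + N ≤ g a₂ := hd
  have hstep : ∀ i, g i ≤ g (i + 1) + 1 ∧ g (i + 1) ≤ g i + 1 := fun i => cnt_step b i m
  have hivt : ∀ v, g a₁ ≤ v → v ≤ g a₂ → ∃ z, g z = v := by
    intro v h1 h2
    rcases le_total a₁ a₂ with h | h
    · obtain ⟨d, rfl⟩ := Nat.exists_eq_add_of_le h
      exact ivt_up g hstep d a₁ v h1 h2
    · obtain ⟨d, rfl⟩ := Nat.exists_eq_add_of_le h
      exact ivt_down g hstep d a₂ v h1 h2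
  set P : Set (Bool → ℕ) :=
    {p : (Bool → ℕ) | ∃ ℓ : ℕ, p = parikh ((List.range m).map (fun j => pfold b (ℓ + j + 1)))}
    with hP
  have hmem : ∀ v : ℕ, v ≤ N → (fun a : Bool => if a then g a₁ + v else m - (g a₁ + v)) ∈ P := by
    intro v hv
    obtain ⟨z, hz⟩ := hivt (g a₁ + v) (by omega) (by omega)
    refine ⟨z, ?_⟩
    set u : List Bool := (List.range m).map (fun j => pfold b (z + j + 1)) with hu
    have hct : u.count true = g a₁ + v := by rw [hu, count_window]; exact hz
    have hlen : u.length = m := by rw [hu]; simp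
    have hcf := count_false_add_true u
    funext a
    cases a
    · rw [if_neg Bool.false_ne_true]
      show m - (g a₁ + v) = u.count false
      omega
    · rw [if_pos rfl]
      show g a₁ + v = u.count true
      omega
  classical
  set F : Finset (Bool → ℕ) :=
    (Finset.range (N + 1)).image
      (fun v => (fun a : Bool => if a then g a₁ + v else m - (g a₁ + v))) with hF
  have hsub : (↑F : Set (Bool → ℕ)) ⊆ P := by
    intro p hp
    simp only [hF, Finset.coe_image, Set.mem_image, Finset.mem_coe, Finset.mem_range] at hp
    obtain ⟨v, hv, rfl⟩ := hp
    exact hmem v (by omega)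
  have hcard : F.card = N + 1 := by
    rw [hF, Finset.card_image_of_injOn, Finset.card_range]
    intro v hv w hw hvw
    have h1 := congrFun hvw true
    simp at h1
    omega
  have hPfin : P.Finite := by
    have hss : P ⊆ (fun c : ℕ => (fun a : Bool => if a then c else m - c)) '' Set.Iic m := by
      rintro p ⟨l, rfl⟩
      set u : List Bool := (List.range m).map (fun j => pfold b (l + j + 1)) with hu
      have hlen : u.length = m := by rw [hu]; simp
      have hcf := count_false_add_true u
      have hle : u.count true ≤ m := by
        have := List.count_le_length (l := u) (a := true)
        omega
      refine ⟨u.count true, hle, ?_⟩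
      funext a
      show (if a = true then List.count true u else m - List.count true u) = parikh u a
      cases a
      · rw [if_neg Bool.false_ne_true]
        show m - u.count true = parikh u false
        show m - u.count true = u.count false
        omega
      · rw [if_pos rfl]
        rfl
    exact Set.Finite.subset ((Set.finite_Iic m).image _) hss
  have hle : F.card ≤ P.ncard := by
    rw [← Set.ncard_coe_finset]
    exact Set.ncard_le_ncard hsub hPfin
  show N < Set.ncard P
  omega
end

section
/- (Additivity Lemma) Let b be an instruction sequence with values in {−1,1}. Let ℓ, ℓ' ≥ 0 and m, d, d' ≥ 1 be integers with ℓ' and d' both even, and let r be such that 2^r > ℓ + m·d. Assume that for each k ≥ 0 the following implication holds: if E_{k,1}(ℓ', d', m) ≠ E_{k,−1}(ℓ', d', m) then b_k = b_{k+r}. Then Δ_b(ℓ, d, m) + Δ_b(ℓ', d', m) = Δ_b(ℓ + 2^r ℓ', d + 2^r d', m) (componentwise equality of vectors of length m). -/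
/-- `ε_{k,β}(ℓ, n)`: the number of positions `i` with `ℓ < i ≤ n` and
`i ≡ 2^k(2+β) (mod 2^{k+2})`, minus `⌊(n-ℓ)/2^{k+2}⌋` (a value in `{0,1}`).
For `β = b_k`, this counts the "extra" 1's of order `k` in the segment
`f_{ℓ+1} ⋯ f_n` of the paperfolding word `f` associated with `b`. -/
def eps (k : ℕ) (β : ℤ) (ℓ n : ℕ) : ℤ :=
  (((Finset.Ioc ℓ n).filter
      (fun (i : ℕ) => (i : ℤ) ≡ 2 ^ k * (2 + β) [ZMOD (2 ^ (k + 2))])).card : ℤ) -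
    ((n - ℓ) / 2 ^ (k + 2) : ℕ)

/-- `Δ_b(ℓ, n) = Σ_{k ≥ 0} ε_{k,b_k}(ℓ, n)` (a finite sum: all but finitely
many terms vanish). -/
noncomputable def delta (b : ℕ → ℤ) (ℓ n : ℕ) : ℤ := ∑' k : ℕ, eps k (b k) ℓ n

/-!
For `A = 2^{k+2}` and `v = 2^k(2+β)`, counting a residue class in `(ℓ, n]` gives the closed form
`ε_{k,β}(ℓ, n) = ⌊(n-v)/A⌋ - ⌊(ℓ-v)/A⌋ - ⌊(n-ℓ)/A⌋`. From it, `ε_{k,β}` is unchanged when both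
endpoints move by multiples of `2^{k+2}`, and `ε_{r+k,β}(ℓ + 2^r ℓ', n + 2^r n') = ε_{k,β}(ℓ', n')`
whenever `ℓ ≤ n < 2^r`. So in `Δ_b` of the combined segment, the orders `k < r` only see the
segment `(ℓ, n]` (as `ℓ'`, `n'` are even), while the orders `r + k` only see `(ℓ', n']`, with
instruction `b_{k+r}` in place of `b_k`; the hypothesis makes that replacement harmless, and
`(ℓ, n]` contributes nothing at orders `≥ r`.
-/

open Finset

def excess (A v ℓ n : ℤ) : ℤ := (n - v) / A - (ℓ - v) / A - (n - ℓ) / A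

lemma excess_add_mul_add_mul {A : ℤ} (hA : A ≠ 0) (v ℓ n s t : ℤ) :
    excess A v (ℓ + A * s) (n + A * t) = excess A v ℓ n := by
  unfold excess
  rw [show n + A * t - v = n - v + A * t by ring, show ℓ + A * s - v = ℓ - v + A * s by ring,
    show n + A * t - (ℓ + A * s) = n - ℓ + A * (t - s) by ring, Int.add_mul_ediv_left _ _ hA,
    Int.add_mul_ediv_left _ _ hA, Int.add_mul_ediv_left _ _ hA]
  ring

lemma add_mul_ediv_mul_of_lt {c x : ℤ} (hx : 0 ≤ x) (hxc : x < c) (y A : ℤ) :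
    (x + c * y) / (c * A) = y / A := by
  rw [← Int.ediv_ediv_of_nonneg (hx.trans hxc.le), Int.add_mul_ediv_left _ _ (by omega),
    Int.ediv_eq_zero_of_lt hx hxc, zero_add]

lemma excess_mul_add_mul {c ℓ n : ℤ} (hℓ : 0 ≤ ℓ) (hℓn : ℓ ≤ n) (hnc : n < c) (A v ℓ' n' : ℤ) :
    excess (c * A) (c * v) (ℓ + c * ℓ') (n + c * n') = excess A v ℓ' n' := by
  unfold excess
  rw [show n + c * n' - c * v = n + c * (n' - v) by ring,
    show ℓ + c * ℓ' - c * v = ℓ + c * (ℓ' - v) by ring,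
    show n + c * n' - (ℓ + c * ℓ') = n - ℓ + c * (n' - ℓ') by ring,
    add_mul_ediv_mul_of_lt (by omega) (by omega), add_mul_ediv_mul_of_lt (by omega) (by omega),
    add_mul_ediv_mul_of_lt (by omega) (by omega)]

lemma card_filter_Ioc_intCast_modEq {ℓ n A : ℕ} (hℓn : ℓ ≤ n) (hA : 0 < A) (v : ℤ) :
    (#{i ∈ Ioc ℓ n | ((i : ℕ) : ℤ) ≡ v [ZMOD A]} : ℤ) = (n - v) / A - (ℓ - v) / A := by
  have hmap : (Ioc ℓ n).map Nat.castEmbedding = Ioc (ℓ : ℤ) n := by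
    ext x
    simp only [mem_map, mem_Ioc, Nat.castEmbedding_apply]
    constructor
    · rintro ⟨y, hy, rfl⟩
      omega
    · intro h
      exact ⟨x.toNat, by omega, by omega⟩
  have hcard := Int.Ioc_filter_modEq_card (r := (A : ℤ)) ℓ n (by positivity) v
  rw [← hmap, filter_map, card_map] at hcard
  have hfloor (x : ℤ) : ⌊(x : ℚ) / ((A : ℤ) : ℚ)⌋ = x / A := by
    rw [Int.cast_natCast, Rat.floor_intCast_div_natCast]
  rw [← Int.cast_sub, ← Int.cast_sub, hfloor, hfloor,
    max_eq_left (sub_nonneg.mpr (Int.ediv_le_ediv (by positivity) (by omega)))] at hcard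
  exact hcard

lemma eps_eq_excess (k : ℕ) (β : ℤ) {ℓ n : ℕ} (hℓn : ℓ ≤ n) :
    eps k β ℓ n = excess (2 ^ (k + 2)) (2 ^ k * (2 + β)) ℓ n := by
  have hcard := card_filter_Ioc_intCast_modEq hℓn (A := 2 ^ (k + 2)) (by positivity)
    (2 ^ k * (2 + β))
  push_cast at hcard
  rw [eps, hcard, Int.natCast_div, Nat.cast_sub hℓn, excess]
  push_cast
  rfl

lemma eps_add_add_of_dvd (k : ℕ) (β : ℤ) {ℓ n s t : ℕ} (hℓn : ℓ ≤ n) (hst : s ≤ t)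
    (hs : 2 ^ (k + 2) ∣ s) (ht : 2 ^ (k + 2) ∣ t) : eps k β (ℓ + s) (n + t) = eps k β ℓ n := by
  obtain ⟨s, rfl⟩ := hs
  obtain ⟨t, rfl⟩ := ht
  rw [eps_eq_excess k β hℓn, eps_eq_excess k β (by omega)]
  push_cast
  exact excess_add_mul_add_mul (by positivity) _ _ _ _ _

lemma eps_add_pow_mul (r k : ℕ) (β : ℤ) {ℓ n ℓ' n' : ℕ} (hℓn : ℓ ≤ n) (hn : n < 2 ^ r)
    (hℓ'n' : ℓ' ≤ n') : eps (r + k) β (ℓ + 2 ^ r * ℓ') (n + 2 ^ r * n') = eps k β ℓ' n' := by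
  have hmul : 2 ^ r * ℓ' ≤ 2 ^ r * n' := Nat.mul_le_mul_left _ hℓ'n'
  rw [eps_eq_excess _ β (by omega), eps_eq_excess k β hℓ'n', add_assoc r k 2, pow_add,
    pow_add 2 r k, mul_assoc]
  push_cast
  exact excess_mul_add_mul (by positivity) (by omega) (by exact_mod_cast hn) _ _ _ _

lemma eps_eq_zero_of_lt_two_pow (r k : ℕ) (β : ℤ) {ℓ n : ℕ} (hℓn : ℓ ≤ n) (hn : n < 2 ^ r) :
    eps (r + k) β ℓ n = 0 := by
  simpa [eps] using eps_add_pow_mul r k β hℓn hn (le_refl 0)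

lemma delta_eq_sum_range (b : ℕ → ℤ) {ℓ n K : ℕ} (hℓn : ℓ ≤ n) (hn : n < 2 ^ K) :
    delta b ℓ n = ∑ k ∈ range K, eps k (b k) ℓ n := by
  refine tsum_eq_sum fun k hk => ?_
  obtain ⟨i, rfl⟩ := Nat.exists_eq_add_of_le (not_lt.mp (mem_range.not.mp hk))
  exact eps_eq_zero_of_lt_two_pow K i _ hℓn hn

lemma eps_eq_of_eps_one_eq_eps_neg_one {k ℓ n : ℕ} {β γ : ℤ} (hβ : β = 1 ∨ β = -1)
    (hγ : γ = 1 ∨ γ = -1) (h : eps k 1 ℓ n = eps k (-1) ℓ n) : eps k β ℓ n = eps k γ ℓ n := by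
  rcases hβ with rfl | rfl <;> rcases hγ with rfl | rfl <;> simp [h]

lemma delta_add_delta (b : ℕ → ℤ) (hb : ∀ k, b k = 1 ∨ b k = -1) {ℓ n ℓ' n' r : ℕ}
    (hℓn : ℓ ≤ n) (hn : n < 2 ^ r) (hℓ'n' : ℓ' ≤ n') (hℓ' : Even ℓ') (hn' : Even n')
    (hb_shift : ∀ k, eps k 1 ℓ' n' ≠ eps k (-1) ℓ' n' → b k = b (k + r)) :
    delta b ℓ n + delta b ℓ' n' = delta b (ℓ + 2 ^ r * ℓ') (n + 2 ^ r * n') := by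
  obtain ⟨M, hM⟩ : ∃ M, n' < 2 ^ M := ⟨n', Nat.lt_two_pow_self⟩
  have hmul : 2 ^ r * ℓ' ≤ 2 ^ r * n' := Nat.mul_le_mul_left _ hℓ'n'
  have hsum : n + 2 ^ r * n' < 2 ^ (r + M) := calc
    n + 2 ^ r * n' < 2 ^ r * (n' + 1) := by rw [mul_add_one]; omega
    _ ≤ 2 ^ r * 2 ^ M := Nat.mul_le_mul_left _ hM
    _ = 2 ^ (r + M) := (pow_add 2 r M).symm
  have hn_rM : n < 2 ^ (r + M) := hn.trans_le (Nat.pow_le_pow_right two_pos (by omega))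
  have low (k : ℕ) (hk : k ∈ range r) :
      eps k (b k) (ℓ + 2 ^ r * ℓ') (n + 2 ^ r * n') = eps k (b k) ℓ n := by
    have hdvd {x : ℕ} (hx : Even x) : 2 ^ (k + 2) ∣ 2 ^ r * x := by
      refine (pow_dvd_pow 2 (by have := mem_range.mp hk; omega : k + 2 ≤ r + 1)).trans ?_
      rw [pow_succ]
      exact mul_dvd_mul_left _ hx.two_dvd
    exact eps_add_add_of_dvd k _ hℓn hmul (hdvd hℓ') (hdvd hn')
  have high (i : ℕ) (_ : i ∈ range M) :
      eps (r + i) (b (r + i)) (ℓ + 2 ^ r * ℓ') (n + 2 ^ r * n') =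
        eps (r + i) (b (r + i)) ℓ n + eps i (b i) ℓ' n' := by
    rw [eps_add_pow_mul r i _ hℓn hn hℓ'n', eps_eq_zero_of_lt_two_pow r i _ hℓn hn, zero_add]
    by_cases hi : eps i 1 ℓ' n' = eps i (-1) ℓ' n'
    · exact eps_eq_of_eps_one_eq_eps_neg_one (hb _) (hb i) hi
    · rw [hb_shift i hi, add_comm]
  rw [delta_eq_sum_range b hℓn hn_rM, delta_eq_sum_range b hℓ'n' hM,
    delta_eq_sum_range b (by omega) hsum, sum_range_add, sum_range_add, sum_congr rfl low,
    sum_congr rfl high, sum_add_distrib, add_assoc]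

theorem additivity_lemma_general
    (b : ℕ → ℤ) (hb : ∀ k, b k = 1 ∨ b k = -1)
    (ℓ ℓ' m d d' r : ℕ)
    (hℓ' : Even ℓ') (hd'e : Even d') (hr : ℓ + m * d < 2 ^ r)
    (hE : ∀ k : ℕ,
      (∃ j < m, eps k 1 (ℓ' + j * d') (ℓ' + (j + 1) * d') ≠
        eps k (-1) (ℓ' + j * d') (ℓ' + (j + 1) * d')) → b k = b (k + r)) :
    ∀ j < m,
      delta b (ℓ + j * d) (ℓ + (j + 1) * d) +
        delta b (ℓ' + j * d') (ℓ' + (j + 1) * d') =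
      delta b (ℓ + 2 ^ r * ℓ' + j * (d + 2 ^ r * d'))
        (ℓ + 2 ^ r * ℓ' + (j + 1) * (d + 2 ^ r * d')) := by
  intro j hj
  rw [show ℓ + 2 ^ r * ℓ' + j * (d + 2 ^ r * d') = ℓ + j * d + 2 ^ r * (ℓ' + j * d') by ring,
    show ℓ + 2 ^ r * ℓ' + (j + 1) * (d + 2 ^ r * d') =
      ℓ + (j + 1) * d + 2 ^ r * (ℓ' + (j + 1) * d') by ring]
  exact delta_add_delta b hb (by gcongr; omega)
    (lt_of_le_of_lt (by gcongr; omega) hr) (by gcongr; omega)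
    (hℓ'.add (hd'e.mul_left j)) (hℓ'.add (hd'e.mul_left (j + 1)))
    fun k hk => hE k ⟨j, hj, hk⟩

/-- The Additivity Lemma (Holub). Let `ℓ, ℓ' ≥ 0` and `m, d, d' ≥ 1` with `ℓ'`
and `d'` even, and let `r` satisfy `2^r > ℓ + m·d`. If for each `k ≥ 0` the
implication "`E_{k,1}(ℓ',d',m) ≠ E_{k,-1}(ℓ',d',m)` implies `b_k = b_{k+r}`"
holds, then `Δ_b(ℓ,d,m) + Δ_b(ℓ',d',m) = Δ_b(ℓ + 2^r ℓ', d + 2^r d', m)`,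
componentwise: the `j`-th components of these vectors (for `0 ≤ j < m`) are
the `Δ_b` values of the `j`-th of the `m` consecutive segments of lengths
`d`, `d'`, `d + 2^r d'` respectively. -/
theorem additivity_lemma
    (b : ℕ → ℤ) (hb : ∀ k, b k = 1 ∨ b k = -1)
    (ℓ ℓ' m d d' r : ℕ) (hm : 1 ≤ m) (hd : 1 ≤ d) (hd' : 1 ≤ d')
    (hℓ' : Even ℓ') (hd'e : Even d') (hr : ℓ + m * d < 2 ^ r)
    (hE : ∀ k : ℕ,
      (∃ j < m, eps k 1 (ℓ' + j * d') (ℓ' + (j + 1) * d') ≠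
        eps k (-1) (ℓ' + j * d') (ℓ' + (j + 1) * d')) → b k = b (k + r)) :
    ∀ j < m,
      delta b (ℓ + j * d) (ℓ + (j + 1) * d) +
        delta b (ℓ' + j * d') (ℓ' + (j + 1) * d') =
      delta b (ℓ + 2 ^ r * ℓ' + j * (d + 2 ^ r * d'))
        (ℓ + 2 ^ r * ℓ' + (j + 1) * (d + 2 ^ r * d')) :=
  additivity_lemma_general b hb ℓ ℓ' m d d' r hℓ' hd'e hr hE
end

section
/- Let w be an infinite word over a finite alphabet. Suppose there exists an integer N such that for every m ≥ 1 there is a factor v of w of length m whose abelian complexity is bounded by N (i.e., for every 1 ≤ n ≤ m, the number of distinct Parikh vectors of factors of v of length n is at most N). Then w contains abelian powers of every order: for every k ≥ 1, some factor of w is an abelian k-power. -/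
/-- `v` is a (finite) factor of the infinite word `w`. -/
def IsFactor {A : Type*} (w : ℕ → A) (v : List A) : Prop :=
  ∃ i : ℕ, v = (List.range v.length).map (fun j => w (i + j))

namespace APaux

def block {A : Type*} (w : ℕ → A) (i n : ℕ) : List A :=
  (List.range n).map fun j => w (i + j)

def cnt {A : Type*} [DecidableEq A] (w : ℕ → A) (i n : ℕ) (a : A) : ℕ :=
  (block w i n).count a

@[simp] lemma block_length {A : Type*} (w : ℕ → A) (i n : ℕ) :
    (block w i n).length = n := by simp [block]

lemma block_add {A : Type*} (w : ℕ → A) (i n m : ℕ) :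
    block w i (n + m) = block w i n ++ block w (i + n) m := by
  unfold block
  rw [List.range_add, List.map_append, List.map_map]
  congr 1
  apply List.map_congr_left
  intro j _
  simp only [Function.comp_apply]
  congr 1
  omega

@[simp] lemma block_zero {A : Type*} (w : ℕ → A) (i : ℕ) : block w i 0 = [] := rfl

lemma block_one {A : Type*} (w : ℕ → A) (i : ℕ) : block w i 1 = [w i] := by
  simp [block, List.range_succ]

lemma cnt_add {A : Type*} [DecidableEq A] (w : ℕ → A) (i n m : ℕ) (a : A) :
    cnt w i (n + m) a = cnt w i n a + cnt w (i + n) m a := by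
  unfold cnt
  rw [block_add, List.count_append]

@[simp] lemma cnt_zero {A : Type*} [DecidableEq A] (w : ℕ → A) (i : ℕ) (a : A) :
    cnt w i 0 a = 0 := rfl

lemma cnt_one_le {A : Type*} [DecidableEq A] (w : ℕ → A) (i : ℕ) (a : A) :
    cnt w i 1 a ≤ 1 := by
  rw [cnt, block_one]
  exact List.count_le_length.trans (by simp)

lemma cnt_slide {A : Type*} [DecidableEq A] (w : ℕ → A) (t n : ℕ) (a : A) :
    cnt w (t+1) n a ≤ cnt w t n a + 1 ∧ cnt w t n a ≤ cnt w (t+1) n a + 1 := by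
  have h1 := cnt_add w t 1 n a
  have h2 := cnt_add w t n 1 a
  rw [Nat.add_comm 1 n] at h1
  have h3 := cnt_one_le w t a
  have h4 := cnt_one_le w (t+n) a
  omega

lemma isFactor_block {A : Type*} (w : ℕ → A) (i n : ℕ) : IsFactor w (block w i n) :=
  ⟨i, by rw [block_length]; rfl⟩

lemma block_infix_block {A : Type*} (w : ℕ → A) {i n i' n' : ℕ}
    (h1 : i ≤ i') (h2 : i' + n' ≤ i + n) : block w i' n' <:+: block w i n := by
  have e : n = (i' - i) + (n' + (i + n - (i' + n'))) := by omega
  rw [e, block_add, block_add]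
  have e1 : i + (i' - i) = i' := by omega
  rw [e1]
  exact ⟨block w i (i' - i), block w (i' + n') (i + n - (i' + n')),
    (List.append_assoc _ _ _)⟩

lemma isFactor_infix {A : Type*} {w : ℕ → A} {v u : List A}
    (hv : IsFactor w v) (hu : u <:+: v) : IsFactor w u := by
  obtain ⟨i, hvi⟩ := hv
  obtain ⟨x, y, hxy⟩ := hu
  have hvb : v = block w i v.length := hvi
  have hlen : v.length = (x.length + u.length) + y.length := by
    rw [← hxy]; simp; omega
  rw [hlen, block_add, block_add] at hvb
  rw [← hxy] at hvb
  have h1 : x ++ u = block w i x.length ++ block w (i + x.length) u.length ∧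
      y = block w (i + (x.length + u.length)) y.length := by
    apply List.append_inj hvb
    simp
  have h2 : x = block w i x.length ∧ u = block w (i + x.length) u.length := by
    apply List.append_inj h1.1
    exact (block_length w i x.length).symm
  exact ⟨i + x.length, h2.2⟩

lemma pset_finite {A : Type*} [DecidableEq A] (v : List A) (n : ℕ) :
    Set.Finite {p : A → ℕ | ∃ u : List A, u <:+: v ∧ u.length = n ∧ p = parikh u} := by
  have h1 : {u : List A | u <:+: v}.Finite := by
    apply Set.Finite.subset (v.sublists.toFinset.finite_toSet)
    intro u hu
    simp only [List.coe_toFinset, Set.mem_setOf_eq, List.mem_sublists]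
    exact hu.sublist
  apply Set.Finite.subset (h1.image parikh)
  rintro p ⟨u, hu, -, rfl⟩
  exact ⟨u, hu, rfl⟩

lemma icc_card_le' {x y N : ℕ} (hxy : x ≤ y) (h : (Set.Icc x y).ncard ≤ N) :
    y + 1 ≤ x + N := by
  rw [← Finset.coe_Icc, Set.ncard_coe_finset, Nat.card_Icc] at h
  omega

lemma ivt (g : ℕ → ℕ) (hg : ∀ t, g (t+1) ≤ g t + 1 ∧ g t ≤ g (t+1) + 1) (p : ℕ) :
    ∀ q, p ≤ q → ∀ c, ((g p ≤ c ∧ c ≤ g q) ∨ (g q ≤ c ∧ c ≤ g p)) →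
    ∃ t, p ≤ t ∧ t ≤ q ∧ g t = c := by
  intro q
  induction q with
  | zero =>
    intro hpq c hc
    have hp0 : p = 0 := by omega
    subst hp0
    exact ⟨0, le_rfl, le_rfl, by omega⟩
  | succ q ih =>
    intro hpq c hc
    by_cases hp : p = q + 1
    · subst hp
      exact ⟨q+1, le_rfl, le_rfl, by omega⟩
    · have hpq' : p ≤ q := by omega
      by_cases hc' : (g p ≤ c ∧ c ≤ g q) ∨ (g q ≤ c ∧ c ≤ g p)
      · obtain ⟨t, h1, h2, h3⟩ := ih hpq' c hc'
        exact ⟨t, h1, by omega, h3⟩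
      · have hgq := hg q
        have : c = g (q+1) := by omega
        exact ⟨q+1, by omega, le_rfl, this.symm⟩

lemma quasi_alpha (f : ℕ → ℝ) (C : ℝ) (hC : 0 ≤ C) (hf0 : f 0 = 0)
    (hq : ∀ i n : ℕ, |f (i + n) - f i - f n| ≤ C) :
    ∃ α : ℝ, ∀ n : ℕ, |f n - n * α| ≤ C := by
  have hmul : ∀ n t : ℕ, |f (t * n) - t * f n| ≤ t * C := by
    intro n t
    induction t with
    | zero => simp [hf0]
    | succ t ih =>
      have h1 := hq (t * n) n
      rw [Nat.succ_mul]
      push_cast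
      push_cast at ih
      have h3 : f (t*n + n) - ((t:ℝ) + 1) * f n =
          (f (t*n + n) - f (t*n) - f n) + (f (t*n) - (t:ℝ) * f n) := by ring
      rw [h3]
      calc |(f (t*n + n) - f (t*n) - f n) + (f (t*n) - (t:ℝ) * f n)|
          ≤ |f (t*n + n) - f (t*n) - f n| + |f (t*n) - (t:ℝ) * f n| := abs_add_le _ _
        _ ≤ C + t * C := add_le_add h1 ih
        _ = ((t:ℝ) + 1) * C := by ring
  have key : ∀ n m : ℕ, 1 ≤ n → 1 ≤ m → (f n - C) / n ≤ (f m + C) / m := by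
    intro n m hn hm
    have h1 := hmul n m
    have h2 := hmul m n
    rw [Nat.mul_comm n m] at h2
    have hn' : (0:ℝ) < n := by exact_mod_cast hn
    have hm' : (0:ℝ) < m := by exact_mod_cast hm
    rw [div_le_div_iff₀ hn' hm']
    rw [abs_le] at h1 h2
    nlinarith [h1.1, h1.2, h2.1, h2.2, mul_pos hn' hm']
  set s : Set ℝ := {x | ∃ n : ℕ, 1 ≤ n ∧ x = (f n - C) / n} with hs
  have hne : s.Nonempty := ⟨(f 1 - C) / 1, 1, le_rfl, by norm_num⟩
  have hbdd : BddAbove s := by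
    refine ⟨(f 1 + C) / ((1:ℕ):ℝ), ?_⟩
    rintro x ⟨n, hn, rfl⟩
    exact key n 1 hn le_rfl
  refine ⟨sSup s, ?_⟩
  intro n
  rcases Nat.eq_zero_or_pos n with rfl | hn
  · simpa [hf0] using hC
  · have hn' : (0:ℝ) < n := by exact_mod_cast hn
    have hlo : (f n - C) / n ≤ sSup s := le_csSup hbdd ⟨n, hn, rfl⟩
    have hhi : sSup s ≤ (f n + C) / n := by
      apply csSup_le hne
      rintro x ⟨m, hm, rfl⟩
      exact key m n hm hn
    rw [div_le_iff₀ hn'] at hlo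
    rw [le_div_iff₀ hn'] at hhi
    rw [abs_le]
    constructor <;> nlinarith

lemma abs_sub_lt_one_of_floor_eq {u v : ℝ} (h : ⌊u⌋ = ⌊v⌋) : |u - v| < 1 := by
  have h1 := Int.floor_le u
  have h2 := Int.floor_le v
  have h3 := Int.lt_floor_add_one u
  have h4 := Int.lt_floor_add_one v
  rw [h] at h1 h3
  rw [abs_sub_lt_iff]
  constructor <;> linarith

lemma int_eq_of_close {a b : ℤ} {c : ℝ} (ha : |(a:ℝ) - c| < 1/2) (hb : |(b:ℝ) - c| < 1/2) :
    a = b := by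
  have h1 : |((a - b : ℤ) : ℝ)| < 1 := by
    push_cast
    rw [abs_lt] at *
    constructor <;> linarith [ha.1, ha.2, hb.1, hb.2]
  have h2 : ((|a - b| : ℤ) : ℝ) < 1 := by rw [Int.cast_abs]; exact h1
  have h3 : |a - b| < 1 := by exact_mod_cast h2
  have h4 := abs_lt.mp h3
  omega

end APaux


namespace APaux2

/-- `u` occurs in `vv m` with arbitrarily much room to the right, for arbitrarily large `m`. -/
def Occ {A : Type*} (vv : ℕ → List A) (u : List A) : Prop :=
  ∀ L : ℕ, ∃ m, ∃ x y : List A, x ++ u ++ y = vv m ∧ L ≤ y.length ∧ L ≤ m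

lemma occ_nil {A : Type*} (vv : ℕ → List A) (h : ∀ m, (vv m).length = m + 1) :
    Occ vv [] := by
  intro L
  exact ⟨L, [], vv L, by simp, by rw [h]; omega, le_rfl⟩

lemma occ_extend {A : Type*} [Finite A] (vv : ℕ → List A) (u : List A) (hu : Occ vv u) :
    ∃ a : A, Occ vv (u ++ [a]) := by
  have H : ∀ L : ℕ, ∃ a : A, ∃ m, ∃ x y : List A,
      x ++ (u ++ [a]) ++ y = vv m ∧ L ≤ y.length ∧ L ≤ m := by
    intro L
    obtain ⟨m, x, y, hxy, hyL, hmL⟩ := hu (L + 1)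
    cases y with
    | nil => simp at hyL
    | cons a y' =>
      refine ⟨a, m, x, y', ?_, ?_, by omega⟩
      · rw [← hxy]; simp
      · simp only [List.length_cons] at hyL; omega
  choose g hg using H
  obtain ⟨a, ha⟩ := Finite.exists_infinite_fiber g
  have hinf : {L : ℕ | g L = a}.Infinite := by
    rw [← Set.infinite_coe_iff]
    exact ha
  refine ⟨a, fun L => ?_⟩
  obtain ⟨L', hL', hgt⟩ := hinf.exists_gt L
  obtain ⟨m, x, y, h1, h2, h3⟩ := hg L'
  exact ⟨m, x, y, by rwa [hL'] at h1, by omega, by omega⟩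

end APaux2


/-- An abelian `k`-power: a concatenation of `k` words of the same positive
length all having the same Parikh vector. -/
def IsAbelianPower {A : Type*} [DecidableEq A] (k : ℕ) (v : List A) : Prop :=
  ∃ us : List (List A), us.length = k ∧ us.flatten = v ∧
    (∃ d : ℕ, 0 < d ∧ ∀ u ∈ us, u.length = d) ∧
    ∀ u₁ ∈ us, ∀ u₂ ∈ us, parikh u₁ = parikh u₂

open APaux APaux2 in
/-- Let `w` be an infinite word over a finite alphabet. If there is an `N` such
that for every `m ≥ 1` some factor `v` of `w` of length `m` has abelian
complexity bounded by `N` (i.e. for every `1 ≤ n ≤ m` the number of distinct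
Parikh vectors of factors of `v` of length `n` is at most `N`), then `w`
contains abelian powers of every order. -/
theorem abelian_powers_of_bounded_abelian_complexity_on_long_factors
    {A : Type*} [Fintype A] [DecidableEq A] (w : ℕ → A)
    (h : ∃ N : ℕ, ∀ m : ℕ, 1 ≤ m → ∃ v : List A,
      IsFactor w v ∧ v.length = m ∧
      ∀ n : ℕ, 1 ≤ n → n ≤ m →
        Set.ncard {p : A → ℕ | ∃ u : List A, u <:+: v ∧ u.length = n ∧ p = parikh u}
          ≤ N) :
    ∀ k : ℕ, 1 ≤ k → ∃ v : List A, IsFactor w v ∧ IsAbelianPower k v := by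
  obtain ⟨N, hN⟩ := h
  intro k hk
  have h' : ∀ m : ℕ, ∃ v : List A, IsFactor w v ∧ v.length = m + 1 ∧
      ∀ n : ℕ, 1 ≤ n → n ≤ m + 1 →
        Set.ncard {p : A → ℕ | ∃ u : List A, u <:+: v ∧ u.length = n ∧ p = parikh u} ≤ N :=
    fun m => hN (m + 1) (by omega)
  choose vv h1 h2 h3 using h'
  have hN1 : 1 ≤ N := by
    have hfin := pset_finite (vv 0) 1
    have hpos : 0 < Set.ncard
        {p : A → ℕ | ∃ u : List A, u <:+: vv 0 ∧ u.length = 1 ∧ p = parikh u} := by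
      rw [Set.ncard_pos hfin]
      exact ⟨parikh (vv 0), vv 0, List.infix_refl _, h2 0, rfl⟩
    have := h3 0 1 le_rfl le_rfl
    omega
  -- build the limit word w'
  have hocc0 : Occ vv [] := occ_nil vv h2
  let chain : ℕ → {u : List A // Occ vv u} := fun n =>
    Nat.rec ⟨[], hocc0⟩ (fun _ p =>
      ⟨p.1 ++ [Classical.choose (occ_extend vv p.1 p.2)],
        Classical.choose_spec (occ_extend vv p.1 p.2)⟩) n
  let w' : ℕ → A := fun n => Classical.choose (occ_extend vv (chain n).1 (chain n).2)
  have hchain : ∀ n, (chain (n + 1)).1 = (chain n).1 ++ [w' n] := fun n => rfl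
  have hpre : ∀ n, (chain n).1 = block w' 0 n := by
    intro n
    induction n with
    | zero => rfl
    | succ n ih =>
      rw [hchain n, ih]
      have e := block_add w' 0 n 1
      rw [Nat.zero_add] at e
      rw [e, block_one]
  have hoccpre : ∀ n, Occ vv (block w' 0 n) := fun n => (hpre n) ▸ (chain n).2
  have hblockinf : ∀ i ℓ L : ℕ, ∃ m, L ≤ m ∧ block w' i ℓ <:+: vv m := by
    intro i ℓ L
    obtain ⟨m, x, y, hxy, -, hm⟩ := hoccpre (i + ℓ) L
    refine ⟨m, hm, List.IsInfix.trans ?_ ⟨x, y, hxy⟩⟩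
    exact block_infix_block w' (Nat.zero_le i) (by omega)
  have hfacw : ∀ i ℓ : ℕ, IsFactor w (block w' i ℓ) := by
    intro i ℓ
    obtain ⟨m, -, hinf⟩ := hblockinf i ℓ 0
    exact isFactor_infix (h1 m) hinf
  clear hchain hpre hoccpre
  clear_value chain w'
  clear chain hocc0
  -- balance
  have hbal : ∀ (a : A) (i j n : ℕ), 1 ≤ n →
      cnt w' i n a + 1 ≤ cnt w' j n a + N := by
    intro a i j n hn
    rcases le_or_gt (cnt w' i n a) (cnt w' j n a) with hij | hij
    · omega
    · obtain ⟨m, hm, hinf⟩ := hblockinf 0 (max i j + n) (max i j + n)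
      have hPfin := pset_finite (vv m) n
      have hmem : ∀ t, t ≤ max i j → cnt w' t n a ∈ ((fun p : A → ℕ => p a) ''
          {p : A → ℕ | ∃ u : List A, u <:+: vv m ∧ u.length = n ∧ p = parikh u}) := by
        intro t ht
        refine ⟨parikh (block w' t n), ⟨block w' t n, ?_, block_length w' t n, rfl⟩, rfl⟩
        exact List.IsInfix.trans (block_infix_block w' (Nat.zero_le t) (by omega)) hinf
      have hsub : Set.Icc (cnt w' j n a) (cnt w' i n a) ⊆ ((fun p : A → ℕ => p a) ''
          {p : A → ℕ | ∃ u : List A, u <:+: vv m ∧ u.length = n ∧ p = parikh u}) := by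
        intro c hc
        rw [Set.mem_Icc] at hc
        rcases le_total i j with hle | hle
        · obtain ⟨t, ht1, ht2, ht3⟩ := ivt (fun t => cnt w' t n a)
            (fun t => cnt_slide w' t n a) i j hle c (Or.inr ⟨hc.1, hc.2⟩)
          exact ht3 ▸ hmem t (by omega)
        · obtain ⟨t, ht1, ht2, ht3⟩ := ivt (fun t => cnt w' t n a)
            (fun t => cnt_slide w' t n a) j i hle c (Or.inl ⟨hc.1, hc.2⟩)
          exact ht3 ▸ hmem t (by omega)
      exact icc_card_le' hij.le (le_trans (Set.ncard_le_ncard hsub (hPfin.image _))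
        (le_trans (Set.ncard_image_le hPfin) (h3 m n hn (by omega))))
  -- quasimorphism property of prefix counts and frequencies
  have hC0 : (0:ℝ) ≤ (N : ℝ) - 1 := by
    have : (1:ℝ) ≤ (N:ℝ) := by exact_mod_cast hN1
    linarith
  have hq : ∀ (a : A) (i n : ℕ),
      |((cnt w' 0 (i + n) a : ℝ)) - (cnt w' 0 i a : ℝ) - (cnt w' 0 n a : ℝ)| ≤ (N : ℝ) - 1 := by
    intro a i n
    have hadd : cnt w' 0 (i + n) a = cnt w' 0 i a + cnt w' i n a := by
      have e := cnt_add w' 0 i n a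
      rwa [Nat.zero_add] at e
    rcases Nat.eq_zero_or_pos n with rfl | hn
    · simp only [Nat.add_zero, cnt_zero, Nat.cast_zero, sub_zero, sub_self, abs_zero]
      exact hC0
    · have b1 := hbal a i 0 n hn
      have b2 := hbal a 0 i n hn
      have b1' : (cnt w' i n a : ℝ) + 1 ≤ (cnt w' 0 n a : ℝ) + N := by exact_mod_cast b1
      have b2' : (cnt w' 0 n a : ℝ) + 1 ≤ (cnt w' i n a : ℝ) + N := by exact_mod_cast b2
      rw [hadd, abs_le]
      push_cast
      constructor <;> linarith
  have halpha : ∀ a : A, ∃ α : ℝ, ∀ n : ℕ,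
      |(cnt w' 0 n a : ℝ) - n * α| ≤ (N : ℝ) - 1 :=
    fun a => quasi_alpha (fun n => (cnt w' 0 n a : ℝ)) ((N:ℝ) - 1) hC0 (by simp)
      (fun i n => hq a i n)
  choose α hα using halpha
  -- the coloring
  have hfloor_mem : ∀ (a : A) (i : ℕ),
      ⌊2 * ((cnt w' 0 i a : ℝ) - i * α a)⌋ ∈
        Set.Icc (-(2 * ((N:ℤ) - 1))) (2 * ((N:ℤ) - 1)) := by
    intro a i
    have hGa := abs_le.mp (hα a i)
    rw [Set.mem_Icc]
    constructor
    · apply Int.le_floor.mpr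
      push_cast
      linarith [hGa.1]
    · have hle : 2 * ((cnt w' 0 i a : ℝ) - i * α a) ≤ ((2 * ((N:ℤ) - 1) : ℤ) : ℝ) := by
        push_cast
        linarith [hGa.2]
      calc ⌊2 * ((cnt w' 0 i a : ℝ) - i * α a)⌋
          ≤ ⌊((2 * ((N:ℤ) - 1) : ℤ) : ℝ)⌋ := Int.floor_le_floor hle
        _ = 2 * ((N:ℤ) - 1) := Int.floor_intCast _
  obtain ⟨d, hd, b, c, hcol⟩ := Combinatorics.exists_mono_homothetic_copy
    (Finset.range (k + 1))
    (fun (i : ℕ) => fun (a : A) =>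
      (⟨⌊2 * ((cnt w' 0 i a : ℝ) - i * α a)⌋, hfloor_mem a i⟩ :
        ↥(Set.Icc (-(2 * ((N:ℤ) - 1))) (2 * ((N:ℤ) - 1)))))
  have hcol' : ∀ s, s ≤ k → ∀ a : A,
      ⌊2 * ((cnt w' 0 (d * s + b) a : ℝ) - (d * s + b : ℕ) * α a)⌋ =
      (c a : ℤ) := by
    intro s hs a
    have e1 := hcol s (Finset.mem_range.mpr (by omega))
    have e2 := congrFun e1 a
    rw [Subtype.ext_iff] at e2
    have hsm : d • s = d * s := by simp
    rw [hsm] at e2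
    exact e2
  -- all chunk counts are close to d * α a
  have hclose : ∀ s, s < k →
      ∀ a : A, |((cnt w' (d * s + b) d a : ℤ) : ℝ) - d * α a| < 1/2 := by
    intro s hs a
    have hfe : ⌊2 * ((cnt w' 0 (d * (s+1) + b) a : ℝ) - (d * (s+1) + b : ℕ) * α a)⌋ =
        ⌊2 * ((cnt w' 0 (d * s + b) a : ℝ) - (d * s + b : ℕ) * α a)⌋ := by
      rw [hcol' (s+1) (by omega) a, hcol' s (by omega) a]
    have habs := abs_sub_lt_one_of_floor_eq hfe
    have hsplit : cnt w' 0 (d * (s+1) + b) a =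
        cnt w' 0 (d * s + b) a + cnt w' (d * s + b) d a := by
      have e : d * (s+1) + b = (d * s + b) + d := by ring
      rw [e]
      have e2 := cnt_add w' 0 (d * s + b) d a
      rwa [Nat.zero_add] at e2
    have heq : 2 * ((cnt w' 0 (d * (s+1) + b) a : ℝ) - (d * (s+1) + b : ℕ) * α a) -
        2 * ((cnt w' 0 (d * s + b) a : ℝ) - (d * s + b : ℕ) * α a) =
        2 * (((cnt w' (d * s + b) d a : ℕ) : ℝ) - d * α a) := by
      rw [hsplit]
      push_cast
      ring
    rw [heq] at habs
    have hcast : ((cnt w' (d * s + b) d a : ℤ) : ℝ) = ((cnt w' (d * s + b) d a : ℕ) : ℝ) := by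
      push_cast
      ring
    rw [hcast]
    rw [abs_lt] at habs ⊢
    constructor <;> linarith [habs.1, habs.2]
  have hkey : ∀ s, s < k → ∀ a : A,
      cnt w' (d * s + b) d a = cnt w' (d * 0 + b) d a := by
    intro s hs a
    have hcl1 := hclose s hs a
    have hcl2 := hclose 0 (by omega) a
    have := int_eq_of_close hcl1 hcl2
    exact_mod_cast this
  -- assemble the abelian power
  refine ⟨block w' b (d * k), hfacw b (d * k), ?_⟩
  refine ⟨(List.range k).map (fun t => block w' (d * t + b) d), by simp, ?_, ⟨d, hd, ?_⟩, ?_⟩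
  · have hflat : ∀ K : ℕ, ((List.range K).map (fun t => block w' (d * t + b) d)).flatten
        = block w' b (d * K) := by
      intro K
      induction K with
      | zero => simp
      | succ K ih =>
        rw [List.range_succ, List.map_append, List.flatten_append, ih]
        have e1 : d * (K+1) = d * K + d := by ring
        have e2 : b + d * K = d * K + b := by ring
        rw [e1, block_add, e2]
        simp
    exact hflat k
  · intro u hu
    simp only [List.mem_map, List.mem_range] at hu
    obtain ⟨t, -, rfl⟩ := hu
    exact block_length w' _ d
  · intro u₁ hu₁ u₂ hu₂
    simp only [List.mem_map, List.mem_range] at hu₁ hu₂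
    obtain ⟨t₁, ht₁, rfl⟩ := hu₁
    obtain ⟨t₂, ht₂, rfl⟩ := hu₂
    funext a
    show cnt w' (d * t₁ + b) d a = cnt w' (d * t₂ + b) d a
    rw [hkey t₁ ht₁ a, hkey t₂ ht₂ a]
end
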